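/- Let ε ∈ (0,1) and let p ≥ 4(1+ε)/ε be a real number. Then there exists a constant C, depending only on p and ε, such that for every continuous function f : [0,1] → ℝ: sup_{t ∈ [0,1]} |f(t)|^p ≤ C ( ∫_0^1 ∫_0^1 |f(t) − f(s)|^p / |t − s|^{pε/(1+ε)} dt ds + |f(0)|^p ). -/

import Mathlib

/-!
Chaining over averages. For `t ∈ [0,1]` let `Wₙ ∋ t` be an interval of length `2⁻ⁿ` inside
`[0,1]`, with `W₀ = [0,1]`. The difference of the averages of `f` over `Wₙ` and `Wₙ₊₁` is the
average of `f u - f v` over `Wₙ × Wₙ₊₁`, where `|u - v| ≤ 2 · 2⁻ⁿ`; by Hölder it is at most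
`(2^(a+1) E)^(1/p) · 2^(-n(a-2)/p)`, where `E` is the double integral and `a = pε/(1+ε) ≥ 4`.
Since `a > 2` these bounds are summable, and by continuity the averages converge to `f t`, so
`|f t - ⨍_{[0,1]} f| ≤ K E^(1/p)`. Comparing with `t = 0` gives `|f t| ≤ 2 K E^(1/p) + |f 0|`.
-/

open MeasureTheory Set Filter Topology
open scoped ENNReal NNReal

noncomputable section

def gagliardoEnergy (S : Set ℝ) (f : ℝ → ℝ) (p a : ℝ) : ℝ≥0∞ :=
  ∫⁻ t in S, ∫⁻ s in S, ENNReal.ofReal (|f t - f s| ^ p / |t - s| ^ a)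

section DifferenceOfAverages

variable {S A B : Set ℝ} {f : ℝ → ℝ} {p a ρ : ℝ}

lemma lintegral_prod_le_gagliardoEnergy (hp : 0 < p) (ha : 0 ≤ a)
    (hA : MeasurableSet A) (hB : MeasurableSet B) (hAS : A ⊆ S) (hBS : B ⊆ S)
    (hρ : ∀ u ∈ A, ∀ v ∈ B, |u - v| ≤ ρ) :
    ∫⁻ z, ‖f z.1 - f z.2‖ₑ ^ p ∂(volume.restrict A).prod (volume.restrict B) ≤
      ENNReal.ofReal (ρ ^ a) * gagliardoEnergy S f p a := by
  set G : ℝ × ℝ → ℝ≥0∞ := fun z => ENNReal.ofReal (|f z.1 - f z.2| ^ p / |z.1 - z.2| ^ a)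
  have hpointwise : ∀ z ∈ A ×ˢ B, ‖f z.1 - f z.2‖ₑ ^ p ≤ ENNReal.ofReal (ρ ^ a) * G z := by
    rintro ⟨u, v⟩ ⟨hu, hv⟩
    rw [Real.enorm_eq_ofReal_abs, ENNReal.ofReal_rpow_of_nonneg (abs_nonneg _) hp.le,
      ← ENNReal.ofReal_mul (Real.rpow_nonneg ((abs_nonneg _).trans (hρ u hu v hv)) a)]
    refine ENNReal.ofReal_le_ofReal ?_
    rcases eq_or_ne u v with rfl | huv
    · simp [Real.zero_rpow hp.ne']
    · have hd : 0 < |u - v| ^ a := Real.rpow_pos_of_pos (abs_pos.2 (sub_ne_zero.2 huv)) a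
      calc |f u - f v| ^ p = |u - v| ^ a * (|f u - f v| ^ p / |u - v| ^ a) := by field_simp
        _ ≤ ρ ^ a * (|f u - f v| ^ p / |u - v| ^ a) := by
          gcongr
          exact hρ u hu v hv
  calc ∫⁻ z, ‖f z.1 - f z.2‖ₑ ^ p ∂(volume.restrict A).prod (volume.restrict B)
      ≤ ∫⁻ z, ENNReal.ofReal (ρ ^ a) * G z ∂(volume.restrict A).prod (volume.restrict B) := by
        refine lintegral_mono_ae ?_
        rw [Measure.prod_restrict]
        exact ae_restrict_of_forall_mem (hA.prod hB) hpointwise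
    _ = ENNReal.ofReal (ρ ^ a) * ∫⁻ z, G z ∂(volume.restrict A).prod (volume.restrict B) :=
        lintegral_const_mul' _ _ ENNReal.ofReal_ne_top
    _ ≤ ENNReal.ofReal (ρ ^ a) * gagliardoEnergy S f p a := by
        gcongr
        calc ∫⁻ z, G z ∂(volume.restrict A).prod (volume.restrict B)
            ≤ ∫⁻ u in A, ∫⁻ v in B, G (u, v) := lintegral_prod_le G
          _ ≤ gagliardoEnergy S f p a :=
            lintegral_mono' (Measure.restrict_mono hAS le_rfl) fun u =>
              lintegral_mono' (Measure.restrict_mono hBS le_rfl) le_rfl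

lemma enorm_integral_prod_sub_le (hp : 1 ≤ p) (ha : 0 ≤ a)
    (hA : MeasurableSet A) (hB : MeasurableSet B) (hAS : A ⊆ S) (hBS : B ⊆ S)
    (hρ : ∀ u ∈ A, ∀ v ∈ B, |u - v| ≤ ρ)
    (hf : AEStronglyMeasurable (fun z : ℝ × ℝ => f z.1 - f z.2)
      ((volume.restrict A).prod (volume.restrict B))) :
    ‖∫ z, f z.1 - f z.2 ∂(volume.restrict A).prod (volume.restrict B)‖ₑ ≤
      (ENNReal.ofReal (ρ ^ a) * gagliardoEnergy S f p a) ^ p⁻¹ *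
        (volume A * volume B) ^ (1 - p⁻¹) := by
  set π := (volume.restrict A).prod (volume.restrict B)
  have hp0 : 0 < p := zero_lt_one.trans_le hp
  have hπ : π univ = volume A * volume B := by
    rw [← univ_prod_univ, Measure.prod_prod, Measure.restrict_apply_univ,
      Measure.restrict_apply_univ]
  calc ‖∫ z, f z.1 - f z.2 ∂π‖ₑ ≤ eLpNorm (fun z : ℝ × ℝ => f z.1 - f z.2) 1 π :=
        (enorm_integral_le_lintegral_enorm _).trans_eq eLpNorm_one_eq_lintegral_enorm.symm
    _ ≤ eLpNorm (fun z : ℝ × ℝ => f z.1 - f z.2) (ENNReal.ofReal p) π *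
          π univ ^ (1 - p⁻¹) := by
        have := eLpNorm_le_eLpNorm_mul_rpow_measure_univ (p := 1) (q := ENNReal.ofReal p)
          (by simpa using hp) hf
        simpa [ENNReal.toReal_ofReal hp0.le] using this
    _ ≤ (ENNReal.ofReal (ρ ^ a) * gagliardoEnergy S f p a) ^ p⁻¹ *
          (volume A * volume B) ^ (1 - p⁻¹) := by
        rw [eLpNorm_eq_lintegral_rpow_enorm_toReal (by simpa using hp0) ENNReal.ofReal_ne_top,
          ENNReal.toReal_ofReal hp0.le, hπ, one_div]
        gcongr
        exact lintegral_prod_le_gagliardoEnergy hp0 ha hA hB hAS hBS hρ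

lemma abs_setAverage_sub_setAverage_le (hp : 1 ≤ p) (ha : 0 ≤ a)
    (hA : MeasurableSet A) (hB : MeasurableSet B) (hAS : A ⊆ S) (hBS : B ⊆ S)
    (hA0 : volume A ≠ 0) (hAfin : volume A ≠ ∞) (hB0 : volume B ≠ 0) (hBfin : volume B ≠ ∞)
    (hfA : IntegrableOn f A) (hfB : IntegrableOn f B)
    (hρ : ∀ u ∈ A, ∀ v ∈ B, |u - v| ≤ ρ) (hE : gagliardoEnergy S f p a ≠ ∞) :
    |(⨍ x in A, f x) - ⨍ x in B, f x| ≤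
      (ρ ^ a * (gagliardoEnergy S f p a).toReal / (volume.real A * volume.real B)) ^ p⁻¹ := by
  have : IsFiniteMeasure (volume.restrict A) := isFiniteMeasure_restrict.2 hAfin
  have : IsFiniteMeasure (volume.restrict B) := isFiniteMeasure_restrict.2 hBfin
  set π := (volume.restrict A).prod (volume.restrict B)
  set E := (gagliardoEnergy S f p a).toReal
  set V := volume.real A * volume.real B
  have hA' : 0 < volume.real A := ENNReal.toReal_pos hA0 hAfin
  have hB' : 0 < volume.real B := ENNReal.toReal_pos hB0 hBfin
  have hV : 0 < V := mul_pos hA' hB'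
  have hρ0 : 0 ≤ ρ := by
    obtain ⟨u, hu⟩ := nonempty_of_measure_ne_zero hA0
    obtain ⟨v, hv⟩ := nonempty_of_measure_ne_zero hB0
    exact (abs_nonneg _).trans (hρ u hu v hv)
  have hint : Integrable (fun z : ℝ × ℝ => f z.1 - f z.2) π :=
    (hfA.comp_fst _).sub (hfB.comp_snd _)
  have hdiff : (⨍ x in A, f x) - ⨍ x in B, f x = (∫ z, f z.1 - f z.2 ∂π) / V := by
    rw [integral_sub (hfA.comp_fst _) (hfB.comp_snd _), integral_fun_fst, integral_fun_snd,
      setAverage_eq, setAverage_eq, measureReal_restrict_apply_univ,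
      measureReal_restrict_apply_univ, smul_eq_mul, smul_eq_mul, smul_eq_mul, smul_eq_mul]
    field_simp [V]
    ring
  have hbound : |∫ z, f z.1 - f z.2 ∂π| ≤ (ρ ^ a * E) ^ p⁻¹ * V ^ (1 - p⁻¹) := by
    have h := enorm_integral_prod_sub_le hp ha hA hB hAS hBS hρ hint.aestronglyMeasurable
    rw [Real.enorm_eq_ofReal_abs, ENNReal.ofReal_le_iff_le_toReal (by finiteness)] at h
    simpa [ENNReal.toReal_mul, ← ENNReal.toReal_rpow, Real.rpow_nonneg hρ0, V, E,
      measureReal_def] using h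
  calc |(⨍ x in A, f x) - ⨍ x in B, f x| = |∫ z, f z.1 - f z.2 ∂π| / V := by
        rw [hdiff, abs_div, abs_of_pos hV]
    _ ≤ (ρ ^ a * E) ^ p⁻¹ * V ^ (1 - p⁻¹) / V := by gcongr
    _ = (ρ ^ a * E / V) ^ p⁻¹ := by
        rw [Real.rpow_sub hV, Real.rpow_one, Real.div_rpow (by positivity) hV.le]
        field_simp

end DifferenceOfAverages

lemma tendsto_setAverage_of_continuousWithinAt {α E : Type*} [PseudoMetricSpace α]
    [MeasurableSpace α] {μ : Measure α} [NormedAddCommGroup E] [NormedSpace ℝ E] [CompleteSpace E]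
    {f : α → E} {S : Set α} {t : α} {W : ℕ → Set α} {r : ℕ → ℝ}
    (hf : ContinuousWithinAt f S t) (hWS : ∀ n, W n ⊆ S) (hWm : ∀ n, MeasurableSet (W n))
    (hW0 : ∀ n, μ (W n) ≠ 0) (hWfin : ∀ n, μ (W n) ≠ ∞) (hfW : ∀ n, IntegrableOn f (W n) μ)
    (hWt : ∀ n, ∀ x ∈ W n, dist x t ≤ r n) (hr : Tendsto r atTop (𝓝 0)) :
    Tendsto (fun n => ⨍ x in W n, f x ∂μ) atTop (𝓝 (f t)) := by
  rw [Metric.tendsto_nhds]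
  intro δ hδ
  obtain ⟨η, hη, hclose⟩ := Metric.continuousWithinAt_iff.1 hf (δ / 2) (half_pos hδ)
  filter_upwards [(Metric.tendsto_nhds.1 hr) η hη] with n hn
  have hmem : ⨍ x in W n, f x ∂μ ∈ Metric.closedBall (f t) (δ / 2) := by
    refine (convex_closedBall _ _).set_average_mem Metric.isClosed_closedBall (hW0 n) (hWfin n)
      (ae_restrict_of_forall_mem (hWm n) fun x hx => ?_) (hfW n)
    have hxt : dist x t < η :=
      (hWt n x hx).trans_lt (lt_of_abs_lt (by simpa [Real.dist_eq] using hn))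
    exact (hclose (hWS n hx) hxt).le
  exact (Metric.mem_closedBall.1 hmem).trans_lt (half_lt_self hδ)

def subintervalAround (t r : ℝ) : Set ℝ := Icc (min t (1 - r)) (min t (1 - r) + r)

section SubintervalAround

variable {t r : ℝ}

lemma subintervalAround_subset (ht : 0 ≤ t) (hr1 : r ≤ 1) :
    subintervalAround t r ⊆ Icc 0 1 :=
  Icc_subset_Icc (le_min ht (by linarith)) (by linarith [min_le_right t (1 - r)])

lemma mem_subintervalAround (ht : t ≤ 1) (hr0 : 0 ≤ r) : t ∈ subintervalAround t r := by
  refine ⟨min_le_left _ _, ?_⟩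
  rcases min_choice t (1 - r) with h | h <;> rw [h] <;> linarith

lemma dist_le_of_mem_subintervalAround {x : ℝ} (ht : t ≤ 1) (hr0 : 0 ≤ r)
    (hx : x ∈ subintervalAround t r) : dist x t ≤ r := by
  simpa using Real.dist_le_of_mem_Icc hx (mem_subintervalAround ht hr0)

lemma measurableSet_subintervalAround : MeasurableSet (subintervalAround t r) := measurableSet_Icc

lemma volume_subintervalAround : volume (subintervalAround t r) = ENNReal.ofReal r := by
  simp [subintervalAround]

lemma subintervalAround_one (ht : 0 ≤ t) : subintervalAround t 1 = Icc 0 1 := by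
  simp [subintervalAround, ht]

end SubintervalAround

lemma rpow_chain_weight {p a E : ℝ} (hE : 0 ≤ E) (n : ℕ) :
    ((2 * (1 / 2 : ℝ) ^ n) ^ a * E / ((1 / 2 : ℝ) ^ n * (1 / 2 : ℝ) ^ (n + 1))) ^ p⁻¹ =
      (2 ^ (a + 1) * E) ^ p⁻¹ * ((1 / 2 : ℝ) ^ ((a - 2) / p)) ^ n := by
  set x : ℝ := (1 / 2 : ℝ) ^ n with hx_def
  have hx : 0 < x := by positivity
  have hweight : (2 * x) ^ a * E / (x * (1 / 2 : ℝ) ^ (n + 1)) = 2 ^ (a + 1) * E * x ^ (a - 2) := by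
    rw [pow_succ, Real.mul_rpow zero_le_two hx.le, Real.rpow_sub hx, Real.rpow_add two_pos,
      Real.rpow_two, Real.rpow_one]
    field_simp
    ring
  have hx' : (x ^ (a - 2)) ^ p⁻¹ = ((1 / 2 : ℝ) ^ ((a - 2) / p)) ^ n := by
    rw [← Real.rpow_mul hx.le, ← Real.rpow_natCast, ← Real.rpow_mul (by norm_num),
      hx_def, ← Real.rpow_natCast, ← Real.rpow_mul (by norm_num)]
    ring_nf
  rw [hweight, Real.mul_rpow (by positivity) (Real.rpow_nonneg hx.le _), hx']

/-- `(2^(a+1))^(1/p) ∑ₙ θⁿ` with `θ = (1/2)^((a-2)/p)`: the geometric series of the chaining. -/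
def embeddingConstant (p a : ℝ) : ℝ := (2 ^ (a + 1)) ^ p⁻¹ / (1 - (1 / 2 : ℝ) ^ ((a - 2) / p))

lemma embeddingConstant_pos {p a : ℝ} (hp : 0 < p) (ha : 2 < a) : 0 < embeddingConstant p a := by
  have : (1 / 2 : ℝ) ^ ((a - 2) / p) < 1 :=
    Real.rpow_lt_one (by norm_num) (by norm_num) (div_pos (by linarith) hp)
  unfold embeddingConstant
  have : 0 < 1 - (1 / 2 : ℝ) ^ ((a - 2) / p) := by linarith
  positivity

lemma abs_setAverage_subintervalAround_sub_le {f : ℝ → ℝ} {p a t r s ρ : ℝ} (hp : 1 ≤ p)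
    (ha : 0 ≤ a) (hf : ContinuousOn f (Icc 0 1)) (hE : gagliardoEnergy (Icc 0 1) f p a ≠ ∞)
    (ht : t ∈ Icc (0 : ℝ) 1) (hr : 0 < r) (hr1 : r ≤ 1) (hs : 0 < s) (hs1 : s ≤ 1)
    (hρ : r + s ≤ ρ) :
    |(⨍ x in subintervalAround t r, f x) - ⨍ x in subintervalAround t s, f x| ≤
      (ρ ^ a * (gagliardoEnergy (Icc 0 1) f p a).toReal / (r * s)) ^ p⁻¹ := by
  have hrS := subintervalAround_subset ht.1 hr1
  have hsS := subintervalAround_subset ht.1 hs1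
  have hdist : ∀ u ∈ subintervalAround t r, ∀ v ∈ subintervalAround t s, |u - v| ≤ ρ := by
    intro u hu v hv
    have := dist_le_of_mem_subintervalAround ht.2 hr.le hu
    have := dist_le_of_mem_subintervalAround ht.2 hs.le hv
    have := dist_triangle_right u v t
    rw [← Real.dist_eq]
    linarith
  refine (abs_setAverage_sub_setAverage_le hp ha measurableSet_subintervalAround
    measurableSet_subintervalAround hrS hsS
    (by simp [volume_subintervalAround, hr]) (by simp [volume_subintervalAround])
    (by simp [volume_subintervalAround, hs]) (by simp [volume_subintervalAround])
    (hf.mono hrS).integrableOn_Icc (hf.mono hsS).integrableOn_Icc hdist hE).trans_eq ?_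
  simp [measureReal_def, volume_subintervalAround, hr.le, hs.le]

theorem abs_sub_setAverage_le {f : ℝ → ℝ} {p a t : ℝ} (hp : 1 ≤ p) (ha : 2 < a)
    (hf : ContinuousOn f (Icc 0 1)) (hE : gagliardoEnergy (Icc 0 1) f p a ≠ ∞)
    (ht : t ∈ Icc (0 : ℝ) 1) :
    |f t - ⨍ x in Icc 0 1, f x| ≤
      embeddingConstant p a * (gagliardoEnergy (Icc 0 1) f p a).toReal ^ p⁻¹ := by
  set E := (gagliardoEnergy (Icc 0 1) f p a).toReal
  set r : ℕ → ℝ := fun n => (1 / 2 : ℝ) ^ n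
  set W : ℕ → Set ℝ := fun n => subintervalAround t (r n)
  have hr0 : ∀ n, 0 < r n := fun n => by positivity
  have hr1 : ∀ n, r n ≤ 1 := fun n => pow_le_one₀ (by norm_num) (by norm_num)
  have hWS : ∀ n, W n ⊆ Icc 0 1 := fun n => subintervalAround_subset ht.1 (hr1 n)
  have hstep : ∀ n, dist (⨍ x in W n, f x) (⨍ x in W (n + 1), f x) ≤
      (2 ^ (a + 1) * E) ^ p⁻¹ * ((1 / 2 : ℝ) ^ ((a - 2) / p)) ^ n := by
    intro n
    rw [Real.dist_eq, ← rpow_chain_weight ENNReal.toReal_nonneg n]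
    refine abs_setAverage_subintervalAround_sub_le hp (by linarith) hf hE ht (hr0 n) (hr1 n)
      (hr0 (n + 1)) (hr1 (n + 1)) ?_
    have : r (n + 1) ≤ r n := pow_le_pow_of_le_one (by norm_num) (by norm_num) n.le_succ
    linarith
  have hlim : Tendsto (fun n => ⨍ x in W n, f x) atTop (𝓝 (f t)) :=
    tendsto_setAverage_of_continuousWithinAt (hf t ht) hWS
      (fun n => measurableSet_subintervalAround)
      (fun n => by simp [W, volume_subintervalAround, hr0 n])
      (fun n => by simp [W, volume_subintervalAround])
      (fun n => (hf.mono (hWS n)).integrableOn_Icc)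
      (fun n x hx => dist_le_of_mem_subintervalAround ht.2 (hr0 n).le hx)
      (tendsto_pow_atTop_nhds_zero_of_lt_one (by norm_num) (by norm_num))
  have hθ : (1 / 2 : ℝ) ^ ((a - 2) / p) < 1 :=
    Real.rpow_lt_one (by norm_num) (by norm_num) (div_pos (by linarith) (by linarith))
  have hW_zero : W 0 = Icc 0 1 := by simpa [W, r] using subintervalAround_one ht.1
  have := dist_le_of_le_geometric_of_tendsto₀ _ _ hθ hstep hlim
  rw [hW_zero, dist_comm, Real.dist_eq] at this
  refine this.trans_eq ?_
  rw [embeddingConstant, Real.mul_rpow (by positivity) ENNReal.toReal_nonneg]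
  ring

lemma Real.rpow_add_le_mul_rpow_add_rpow {x y p : ℝ} (hx : 0 ≤ x) (hy : 0 ≤ y) (hp : 1 ≤ p) :
    (x + y) ^ p ≤ 2 ^ (p - 1) * (x ^ p + y ^ p) := by
  lift x to ℝ≥0 using hx
  lift y to ℝ≥0 using hy
  exact_mod_cast NNReal.rpow_add_le_mul_rpow_add_rpow x y hp

lemma ENNReal.ofReal_biSup_le {ι : Type*} {g : ι → ℝ} {s : Set ι} {X : ℝ≥0∞}
    (h : ∀ i ∈ s, ENNReal.ofReal (g i) ≤ X) : ENNReal.ofReal (⨆ i ∈ s, g i) ≤ X := by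
  rcases eq_or_ne X ∞ with rfl | hX
  · exact le_top
  simp only [ENNReal.ofReal_le_iff_le_toReal hX] at h ⊢
  exact Real.iSup_le (fun i => Real.iSup_le (h i) ENNReal.toReal_nonneg) ENNReal.toReal_nonneg

theorem abs_rpow_le_gagliardoEnergy_add {f : ℝ → ℝ} {p a t : ℝ} (hp : 1 ≤ p) (ha : 2 < a)
    (hf : ContinuousOn f (Icc 0 1)) (hE : gagliardoEnergy (Icc 0 1) f p a ≠ ∞)
    (ht : t ∈ Icc (0 : ℝ) 1) :
    |f t| ^ p ≤ 2 ^ (p - 1) * ((2 * embeddingConstant p a) ^ p + 1) *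
      ((gagliardoEnergy (Icc 0 1) f p a).toReal + |f 0| ^ p) := by
  set E := (gagliardoEnergy (Icc 0 1) f p a).toReal
  set K := embeddingConstant p a
  have hp0 : 0 < p := zero_lt_one.trans_le hp
  have hK : 0 < K := embeddingConstant_pos hp0 ha
  have hE0 : 0 ≤ E := ENNReal.toReal_nonneg
  have hbound : |f t| ≤ 2 * K * E ^ p⁻¹ + |f 0| := by
    have h₁ := abs_sub_setAverage_le hp ha hf hE ht
    have h₀ := abs_sub_setAverage_le hp ha hf hE ⟨le_rfl, zero_le_one⟩
    have := abs_sub_abs_le_abs_sub (f t) (f 0)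
    have := abs_sub_le (f t) (⨍ x in Icc 0 1, f x) (f 0)
    rw [abs_sub_comm] at h₀
    linarith
  calc |f t| ^ p ≤ (2 * K * E ^ p⁻¹ + |f 0|) ^ p := by gcongr
    _ ≤ 2 ^ (p - 1) * ((2 * K * E ^ p⁻¹) ^ p + |f 0| ^ p) :=
        Real.rpow_add_le_mul_rpow_add_rpow (by positivity) (abs_nonneg _) hp
    _ = 2 ^ (p - 1) * ((2 * K) ^ p * E + |f 0| ^ p) := by
        rw [Real.mul_rpow (by positivity) (by positivity), ← Real.rpow_mul hE0,
          inv_mul_cancel₀ hp0.ne', Real.rpow_one]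
    _ ≤ 2 ^ (p - 1) * ((2 * K) ^ p + 1) * (E + |f 0| ^ p) := by
        have : 0 ≤ |f 0| ^ p := by positivity
        have : 0 ≤ (2 * K) ^ p := by positivity
        rw [mul_assoc]
        gcongr _ * ?_
        nlinarith

theorem stmt11_general (ε p : ℝ) (hε0 : 0 < ε) (hp : 4 * (1 + ε) / ε ≤ p) :
    ∃ C : ℝ, 0 < C ∧
      ∀ f : ℝ → ℝ, ContinuousOn f (Icc 0 1) →
        ENNReal.ofReal (⨆ t ∈ Icc (0 : ℝ) 1, |f t| ^ p) ≤
          ENNReal.ofReal C *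
            ((∫⁻ t in Icc (0 : ℝ) 1, ∫⁻ s in Icc (0 : ℝ) 1,
                ENNReal.ofReal (|f t - f s| ^ p / |t - s| ^ (p * ε / (1 + ε)))) +
              ENNReal.ofReal (|f 0| ^ p)) := by
  set a := p * ε / (1 + ε)
  have hp' : 4 * (1 + ε) ≤ p * ε := (div_le_iff₀ hε0).1 hp
  have ha : 2 < a := by rw [lt_div_iff₀ (by linarith)]; linarith
  have hp1 : 1 ≤ p := by nlinarith
  have hK : 0 < embeddingConstant p a := embeddingConstant_pos (by linarith) ha
  have hC : 0 < 2 ^ (p - 1) * ((2 * embeddingConstant p a) ^ p + 1) := by positivity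
  refine ⟨_, hC, fun f hf => ENNReal.ofReal_biSup_le fun t ht => ?_⟩
  change _ ≤ _ * (gagliardoEnergy (Icc 0 1) f p a + _)
  rcases eq_or_ne (gagliardoEnergy (Icc 0 1) f p a) ∞ with hE | hE
  · simp [hE, ENNReal.mul_top, hC]
  rw [← ENNReal.ofReal_toReal hE, ← ENNReal.ofReal_add ENNReal.toReal_nonneg (by positivity),
    ← ENNReal.ofReal_mul hC.le]
  exact ENNReal.ofReal_le_ofReal (abs_rpow_le_gagliardoEnergy_add hp1 ha hf hE ht)

/-- for `ε ∈ (0,1)` and real `p ≥ 4(1+ε)/ε` there is a constant `C > 0`,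
depending only on `p` and `ε`, such that for every continuous `f : [0,1] → ℝ`,
`sup_{t∈[0,1]} |f(t)|^p ≤ C(∫_0^1∫_0^1 |f(t)−f(s)|^p/|t−s|^{pε/(1+ε)} dt ds + |f(0)|^p)`,
the inequality being trivially true if the double integral is infinite. -/
theorem stmt11 (ε p : ℝ) (hε0 : 0 < ε) (hε1 : ε < 1) (hp : 4 * (1 + ε) / ε ≤ p) :
    ∃ C : ℝ, 0 < C ∧
      ∀ f : ℝ → ℝ, ContinuousOn f (Icc 0 1) →
        ENNReal.ofReal (⨆ t ∈ Icc (0 : ℝ) 1, |f t| ^ p) ≤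
          ENNReal.ofReal C *
            ((∫⁻ t in Icc (0 : ℝ) 1, ∫⁻ s in Icc (0 : ℝ) 1,
                ENNReal.ofReal (|f t - f s| ^ p / |t - s| ^ (p * ε / (1 + ε)))) +
              ENNReal.ofReal (|f 0| ^ p)) :=
  stmt11_general ε p hε0 hp
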